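/- Let A be a set of alternatives with |A| ≥ 3, let X be the set of strict linear orders on A, let I = {1,...,N}, and let f : X^N → A be a social choice function that is unanimous and strategy-proof. If a group G ⊆ I with |G| ≥ 2 is decisive, then G has a proper subset which is decisive. (Contraction lemma) -/

import Mathlib

/-- A strict linear order (complete, transitive, asymmetric binary relation) on `A`. -/
def Pref (A : Type*) : Type _ := {r : A → A → Prop // IsStrictTotalOrder A r}

/-- A profile of rankings for `N` individuals. -/
def Profile (A : Type*) (N : ℕ) : Type _ := Fin N → Pref A

/-- `a` is ranked at the top of the ranking `p`. -/
def RanksTop {A : Type*} (p : Pref A) (a : A) : Prop := ∀ c, c ≠ a → p.1 a c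

/-- `a` is ranked at the bottom of the ranking `p`. -/
def RanksBottom {A : Type*} (p : Pref A) (a : A) : Prop := ∀ c, c ≠ a → p.1 c a

/-- `a` is ranked second by `p`: above every alternative except exactly one. -/
def RanksSecond {A : Type*} (p : Pref A) (a : A) : Prop :=
  ∃ c, c ≠ a ∧ p.1 c a ∧ ∀ d, d ≠ a → d ≠ c → p.1 a d

/-- `G` is decisive over `a` for the social choice function `f`. -/
def DecisiveOver {A : Type*} {N : ℕ} (f : Profile A N → A) (G : Set (Fin N)) (a : A) : Prop :=
  ∀ x : Profile A N, (∀ i ∈ G, RanksTop (x i) a) → f x = a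

/-- `G` is decisive (over every alternative) for `f`. -/
def Decisive {A : Type*} {N : ℕ} (f : Profile A N → A) (G : Set (Fin N)) : Prop :=
  ∀ a : A, DecisiveOver f G a

/-- `f` is unanimous: the whole group of individuals is decisive. -/
def Unanimous {A : Type*} {N : ℕ} (f : Profile A N → A) : Prop :=
  Decisive f Set.univ

/-- `f` is manipulable at `x` by `i` via `xi'`. -/
def ManipulableAt {A : Type*} {N : ℕ} (f : Profile A N → A)
    (x : Profile A N) (i : Fin N) (xi' : Pref A) : Prop :=
  (x i).1 (f (Function.update x i xi')) (f x)

/-- `f` is strategy-proof: not manipulable. -/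
def StrategyProof {A : Type*} {N : ℕ} (f : Profile A N → A) : Prop :=
  ∀ (x : Profile A N) (i : Fin N) (xi' : Pref A), ¬ ManipulableAt f x i xi'

/-- `f` is dictatorial: some singleton group is decisive. -/
def Dictatorial {A : Type*} {N : ℕ} (f : Profile A N → A) : Prop :=
  ∃ i : Fin N, Decisive f {i}

/-!
Strategy-proofness makes `f` monotonic in the sense of Maskin, and with unanimity this gives
the Pareto property. For a coalition `T` and alternatives `u ≠ v`, the profile in which `T`
ranks `u, v` on top and everyone else `v, u` elects `u` or `v`; letting `u` sink to the bottom
outside `T` shows that the side that wins is decisive over its favourite, and a third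
alternative spreads decisiveness over one alternative to all of them. So for every coalition
either it or its complement is decisive, and a Condorcet cycle shows that decisive coalitions
are closed under intersection. Now for `i ∈ G`, either `{i}` is decisive, or `{i}ᶜ` is, and
then so is `G ∩ {i}ᶜ = G \ {i}`.
-/

theorem Function.induction_update {ι β : Type*} [Finite ι] [DecidableEq ι]
    {P : (ι → β) → Prop} {x y : ι → β} (hx : P x)
    (step : ∀ (z : ι → β) (j : ι), (∀ k, z k = x k ∨ z k = y k) → z j = x j → P z →
      P (Function.update z j (y j))) :
    P y := by
  have := Fintype.ofFinite ι
  suffices ∀ s : Finset ι, P (s.piecewise y x) by simpa using this Finset.univ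
  intro s
  induction s using Finset.induction_on with
  | empty => simpa using hx
  | insert j s hj ih =>
    rw [Finset.piecewise_insert]
    exact step _ j (fun k => Finset.piecewise_cases s y x (fun b => b = x k ∨ b = y k)
      (Or.inr rfl) (Or.inl rfl)) (Finset.piecewise_eq_of_notMem _ _ _ hj) ih

namespace Pref

variable {A : Type*}

theorem asymm (p : Pref A) {x y : A} : p.1 x y → ¬ p.1 y x :=
  have := p.2; asymm_of p.1

theorem ne_of_rel (p : Pref A) {x y : A} (h : p.1 x y) : x ≠ y := by
  have := p.2
  rintro rfl
  exact irrefl_of p.1 x h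

theorem rel_of_not_rel (p : Pref A) {x y : A} (hne : x ≠ y) (h : ¬ p.1 y x) : p.1 x y := by
  have := p.2
  rcases trichotomous_of p.1 x y with hxy | rfl | hyx
  exacts [hxy, absurd rfl hne, absurd hyx h]

/-- Ties in the score `s` (lower is better) are broken by a fixed well-order of `A`. -/
noncomputable def ofScore (s : A → ℕ) : Pref A :=
  letI : LinearOrder A := LinearOrder.lift' (fun x => toLex (s x, embeddingToCardinal x))
    fun _ _ h => embeddingToCardinal.injective (congrArg (fun q => (ofLex q).2) h)
  ⟨(· < ·), inferInstance⟩

theorem ofScore_rel_of_lt {s : A → ℕ} {x y : A} (h : s x < s y) : (ofScore s).1 x y :=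
  Prod.Lex.toLex_lt_toLex.2 (Or.inl h)

open scoped Classical

noncomputable def twoTop (u v : A) : Pref A :=
  ofScore fun t => if t = u then 0 else if t = v then 1 else 2

noncomputable def topBottom (v u : A) : Pref A :=
  ofScore fun t => if t = v then 0 else if t = u then 2 else 1

noncomputable def threeTop (a b c : A) : Pref A :=
  ofScore fun t => if t = a then 0 else if t = b then 1 else if t = c then 2 else 3

theorem twoTop_ranksTop (u v : A) : RanksTop (twoTop u v) u :=
  fun c hc => ofScore_rel_of_lt (by simp only [hc, if_false]; split_ifs <;> omega)

theorem twoTop_rel_of_ne {u v w : A} (hu : w ≠ u) (hv : w ≠ v) : (twoTop u v).1 v w :=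
  ofScore_rel_of_lt (by simp only [hu, hv, if_false]; split_ifs <;> omega)

theorem topBottom_ranksTop (v u : A) : RanksTop (topBottom v u) v :=
  fun c hc => ofScore_rel_of_lt (by simp only [hc, if_false]; split_ifs <;> omega)

theorem topBottom_ranksBottom {v u : A} (huv : u ≠ v) : RanksBottom (topBottom v u) u :=
  fun c hc => ofScore_rel_of_lt (by simp only [hc, huv, if_false, if_true]; split_ifs <;> omega)

theorem threeTop_rel_first_second {a b c : A} (hba : b ≠ a) : (threeTop a b c).1 a b :=
  ofScore_rel_of_lt (by simp [hba])

theorem threeTop_rel_second_third {a b c : A} (hca : c ≠ a) (hcb : c ≠ b) :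
    (threeTop a b c).1 b c :=
  ofScore_rel_of_lt (by simp only [hca, hcb, if_false, if_true]; split_ifs <;> omega)

theorem threeTop_rel_of_ne {a b c x w : A} (hx : x = a ∨ x = b ∨ x = c) (ha : w ≠ a)
    (hb : w ≠ b) (hc : w ≠ c) : (threeTop a b c).1 x w :=
  ofScore_rel_of_lt (by
    rcases hx with rfl | rfl | rfl <;> simp only [ha, hb, hc, if_false] <;> split_ifs <;> omega)

end Pref

section SocialChoice

variable {A : Type*} {N : ℕ} {f : Profile A N → A}

open Function

theorem StrategyProof.update_eq_or (hSTP : StrategyProof f) {x : Profile A N} {w : A} (j : Fin N)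
    (p : Pref A) (hx : f x = w) :
    f (update x j p) = w ∨ (x j).1 w (f (update x j p)) ∧ p.1 (f (update x j p)) w := by
  by_cases hw : f (update x j p) = w
  · exact Or.inl hw
  have hx' : ¬ (x j).1 (f (update x j p)) w := hx ▸ hSTP x j p
  have hp : ¬ p.1 w (f (update x j p)) := by
    have h := hSTP (update x j p) j (x j)
    unfold ManipulableAt at h
    rwa [show update (update x j p) j (x j) = x from (update_idem ..).trans (update_eq_self ..),
      show update x j p j = p from update_self .., hx] at h
  exact Or.inr ⟨(x j).rel_of_not_rel (Ne.symm hw) hx', p.rel_of_not_rel hw hp⟩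

theorem StrategyProof.update_eq (hSTP : StrategyProof f) {x : Profile A N} {w : A} {j : Fin N}
    {p : Pref A} (hx : f x = w) (h : ∀ w', (x j).1 w w' → p.1 w w') :
    f (update x j p) = w :=
  (hSTP.update_eq_or j p hx).resolve_right fun ⟨hxj, hp⟩ => p.asymm (h _ hxj) hp

theorem StrategyProof.eq_of_forall_rel (hSTP : StrategyProof f) {x y : Profile A N} {w : A}
    (hx : f x = w) (h : ∀ j w', (x j).1 w w' → (y j).1 w w') : f y = w := by
  classical
  exact Function.induction_update (P := fun z => f z = w) hx
    fun z j _ hzj hz => hSTP.update_eq hz (hzj ▸ h j)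

theorem DecisiveOver.apply_ne {X : Set (Fin N)} {γ β : A} (hX : DecisiveOver f X γ)
    (hSTP : StrategyProof f) (hγβ : γ ≠ β) {z : Profile A N} (hz : ∀ j ∈ X, (z j).1 γ β) :
    f z ≠ β := by
  classical
  intro hzβ
  let y : Profile A N := fun j => if j ∈ X then Pref.twoTop γ β else z j
  have hyβ : f y = β := hSTP.eq_of_forall_rel hzβ fun j w hw => by
    by_cases hj : j ∈ X
    · simp only [y, if_pos hj]
      exact Pref.twoTop_rel_of_ne (fun h => (z j).asymm (hz j hj) (h ▸ hw))
        ((z j).ne_of_rel hw).symm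
    · simpa only [y, if_neg hj] using hw
  have hyγ : f y = γ := hX y fun j hj => by
    simpa only [y, if_pos hj] using Pref.twoTop_ranksTop γ β
  exact hγβ (hyγ.symm.trans hyβ)

theorem Unanimous.apply_ne (hUNM : Unanimous f) (hSTP : StrategyProof f) {x : Profile A N}
    {v d : A} (hvd : v ≠ d) (h : ∀ j, (x j).1 v d) : f x ≠ d :=
  (hUNM v).apply_ne hSTP hvd fun j _ => h j

open scoped Classical in
noncomputable def binaryProfile (T : Set (Fin N)) (u v : A) : Profile A N :=
  fun j => if j ∈ T then Pref.twoTop u v else Pref.twoTop v u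

theorem binaryProfile_compl (T : Set (Fin N)) (u v : A) :
    (binaryProfile Tᶜ v u : Profile A N) = binaryProfile T u v := by
  funext j
  by_cases hj : j ∈ T <;> simp [binaryProfile, hj]

theorem binaryProfile_ranksTop {T : Set (Fin N)} {j : Fin N} (hj : j ∈ T) (u v : A) :
    RanksTop (binaryProfile T u v j) u := by
  simpa [binaryProfile, hj] using Pref.twoTop_ranksTop u v

theorem binaryProfile_rel_of_ne (T : Set (Fin N)) (j : Fin N) {u v w : A} (hu : w ≠ u)
    (hv : w ≠ v) : (binaryProfile T u v j).1 v w := by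
  unfold binaryProfile
  split_ifs
  exacts [Pref.twoTop_rel_of_ne hu hv, Pref.twoTop_ranksTop v u w hv]

theorem apply_binaryProfile_eq_or (hUNM : Unanimous f) (hSTP : StrategyProof f)
    (T : Set (Fin N)) (u v : A) : f (binaryProfile T u v) = u ∨ f (binaryProfile T u v) = v := by
  by_contra! h
  exact hUNM.apply_ne hSTP (Ne.symm h.2) (fun j => binaryProfile_rel_of_ne T j h.1 h.2) rfl

theorem decisiveOver_of_apply_binaryProfile (hUNM : Unanimous f) (hSTP : StrategyProof f)
    {T : Set (Fin N)} {u v : A} (huv : u ≠ v) (h : f (binaryProfile T u v) = u) :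
    DecisiveOver f T u := by
  classical
  let d : Profile A N := fun j => if j ∈ T then Pref.twoTop u v else Pref.topBottom v u
  have hd_rel : ∀ j w, w ≠ u → w ≠ v → (d j).1 v w := fun j w hu hv => by
    by_cases hj : j ∈ T
    · simpa only [d, if_pos hj] using Pref.twoTop_rel_of_ne hu hv
    · simpa only [d, if_neg hj] using Pref.topBottom_ranksTop v u w hv
  -- Outside `T`, `u` sinks to the bottom one agent at a time. Since `v` stays above every
  -- other alternative for everyone, strategy-proofness leaves no room for the outcome to move.
  have hd : f d = u := by
    refine Function.induction_update (P := fun z => f z = u) h fun z j hz hzj hzu => ?_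
    rcases hSTP.update_eq_or j (d j) hzu with hu | ⟨hx, hdj⟩
    · exact hu
    set w := f (update z j (d j))
    rw [hzj] at hx
    have hwu : w ≠ u := ((binaryProfile T u v j).ne_of_rel hx).symm
    by_cases hjT : j ∈ T
    · simp only [d, if_pos hjT] at hdj
      exact absurd hdj ((Pref.twoTop u v).asymm (Pref.twoTop_ranksTop u v w hwu))
    have hwv : w ≠ v := by
      intro hwv
      simp only [binaryProfile, if_neg hjT, hwv] at hx
      exact (Pref.twoTop v u).asymm hx (Pref.twoTop_ranksTop v u u huv)
    refine absurd rfl (hUNM.apply_ne hSTP hwv.symm fun k => ?_)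
    by_cases hkj : k = j
    · rw [hkj, show update z j (d j) j = d j from update_self ..]
      exact hd_rel j w hwu hwv
    · rw [update_of_ne hkj]
      rcases hz k with hk | hk <;> rw [hk]
      exacts [binaryProfile_rel_of_ne T k hwu hwv, hd_rel k w hwu hwv]
  intro y hy
  refine hSTP.eq_of_forall_rel hd fun j w hw => ?_
  by_cases hj : j ∈ T
  · exact hy j hj w ((Pref.ne_of_rel _ hw).symm)
  · simp only [d, if_neg hj] at hw
    exact absurd hw ((Pref.topBottom v u).asymm
      (Pref.topBottom_ranksBottom huv w ((Pref.ne_of_rel _ hw).symm)))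

theorem decisiveOver_or_decisiveOver_compl (hUNM : Unanimous f) (hSTP : StrategyProof f)
    (T : Set (Fin N)) {u v : A} (huv : u ≠ v) : DecisiveOver f T u ∨ DecisiveOver f Tᶜ v :=
  (apply_binaryProfile_eq_or hUNM hSTP T u v).imp
    (decisiveOver_of_apply_binaryProfile hUNM hSTP huv)
    fun h => decisiveOver_of_apply_binaryProfile hUNM hSTP huv.symm
      (by rwa [binaryProfile_compl])

theorem DecisiveOver.eq_of_compl {T : Set (Fin N)} {u v : A} (hu : DecisiveOver f T u)
    (hv : DecisiveOver f Tᶜ v) : u = v :=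
  (hu _ fun _ hj => binaryProfile_ranksTop hj u v).symm.trans
    (hv _ fun _ hj => binaryProfile_compl T u v ▸ binaryProfile_ranksTop hj v u)

theorem DecisiveOver.decisive (hA : 3 ≤ Cardinal.mk A) (hUNM : Unanimous f)
    (hSTP : StrategyProof f) {T : Set (Fin N)} {u : A} (hu : DecisiveOver f T u) :
    Decisive f T := by
  intro w
  rcases eq_or_ne w u with rfl | hwu
  · exact hu
  obtain ⟨v, hvw, hvu⟩ := Cardinal.exists_ne_ne_of_three_le hA w u
  exact (decisiveOver_or_decisiveOver_compl hUNM hSTP T hvw.symm).resolve_right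
    fun hv => hvu (hu.eq_of_compl hv).symm

theorem decisive_or_decisive_compl (hA : 3 ≤ Cardinal.mk A) (hUNM : Unanimous f)
    (hSTP : StrategyProof f) (T : Set (Fin N)) : Decisive f T ∨ Decisive f Tᶜ := by
  obtain ⟨u, v, huv⟩ := Cardinal.two_le_iff.1 (le_trans (by norm_num) hA)
  exact (decisiveOver_or_decisiveOver_compl hUNM hSTP T huv).imp
    (·.decisive hA hUNM hSTP) (·.decisive hA hUNM hSTP)

theorem Decisive.inter (hA : 3 ≤ Cardinal.mk A) (hUNM : Unanimous f) (hSTP : StrategyProof f)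
    {G H : Set (Fin N)} (hG : Decisive f G) (hH : Decisive f H) : Decisive f (G ∩ H) := by
  classical
  refine (decisive_or_decisive_compl hA hUNM hSTP (G ∩ H)).resolve_right fun hc => ?_
  obtain ⟨a, b, hab⟩ := Cardinal.two_le_iff.1 (le_trans (by norm_num) hA)
  obtain ⟨c, hca, hcb⟩ := Cardinal.exists_ne_ne_of_three_le hA a b
  -- A Condorcet cycle: `G` ranks `a` over `b`, `H` ranks `b` over `c`,
  -- and `(G ∩ H)ᶜ` ranks `c` over `a`.
  let z : Profile A N := fun k =>
    if k ∈ G ∩ H then Pref.threeTop a b c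
    else if k ∈ G then Pref.threeTop c a b else Pref.threeTop b c a
  have hzb : f z ≠ b := (hG a).apply_ne hSTP hab fun k hkG => by
    by_cases hkH : k ∈ H
    · simp only [z, if_pos (Set.mem_inter hkG hkH)]
      exact Pref.threeTop_rel_first_second hab.symm
    · simp only [z, if_neg fun h : k ∈ G ∩ H => hkH h.2, if_pos hkG]
      exact Pref.threeTop_rel_second_third hcb.symm hab.symm
  have hza : f z ≠ a := (hc c).apply_ne hSTP hca fun k hk => by
    simp only [z, if_neg hk]
    split_ifs
    exacts [Pref.threeTop_rel_first_second hca.symm,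
      Pref.threeTop_rel_second_third hab hca.symm]
  have hzc : f z ≠ c := (hH b).apply_ne hSTP hcb.symm fun k hkH => by
    by_cases hkG : k ∈ G
    · simp only [z, if_pos (Set.mem_inter hkG hkH)]
      exact Pref.threeTop_rel_second_third hca hcb
    · simp only [z, if_neg fun h : k ∈ G ∩ H => hkG h.1, if_neg hkG]
      exact Pref.threeTop_rel_first_second hcb
  set w := f z
  refine hUNM.apply_ne hSTP hza.symm (fun k => ?_) rfl
  simp only [z]
  split_ifs <;> apply Pref.threeTop_rel_of_ne (by simp) <;> assumption

end SocialChoice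

/-- **Contraction lemma**: a decisive group with at least two members has a decisive
proper subset. -/
theorem contraction_lemma {A : Type*} {N : ℕ} (hA : 3 ≤ Cardinal.mk A)
    (f : Profile A N → A) (hUNM : Unanimous f) (hSTP : StrategyProof f)
    (G : Set (Fin N)) (hG : 2 ≤ G.ncard) (hdec : Decisive f G) :
    ∃ G' : Set (Fin N), G' ⊂ G ∧ Decisive f G' := by
  obtain ⟨i, hi, j, hj, hij⟩ := (Set.one_lt_ncard (Set.toFinite G)).1 hG
  rcases decisive_or_decisive_compl hA hUNM hSTP {i} with hdec_i | hdec_compl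
  · exact ⟨{i}, (Set.ssubset_iff_of_subset (Set.singleton_subset_iff.2 hi)).2 ⟨j, hj, hij.symm⟩,
      hdec_i⟩
  · refine ⟨G \ {i}, Set.sdiff_singleton_ssubset.2 hi, ?_⟩
    simpa only [Set.sdiff_eq] using hdec.inter hA hUNM hSTP hdec_compl
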